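/- Let α ∈ (1,∞) and let p_{Y|X} be a channel with p_{Y|X}(y|x) > 0 for all x, y. Let q̃^{(0)}_{X,Y} be a strictly positive probability distribution on 𝒳×𝒴 and define recursively: r^{(k)}_{X|Y}(x|y) := q̃^{(k)}_{X,Y}(x,y)/Σ_{x'} q̃^{(k)}_{X,Y}(x',y); p^{(k+1)}_X(x) := Σ_y q̃^{(k)}_{X,Y}(x,y); and q̃^{(k+1)}_{X,Y}(x,y) := q̂_X(x) q̂_{Y|X}(y|x) built from (p^{(k+1)}_X, r^{(k)}_{X|Y}) via q̂_{Y|X}(y|x) := p_{Y|X}(y|x) r^{(k)}_{X|Y}(x|y)^{1−1/α} / Σ_{y'} p_{Y|X}(y'|x) r^{(k)}_{X|Y}(x|y')^{1−1/α} and q̂_X(x) := p^{(k+1)}_X(x)^{α/(2α−1)} ( Σ_y p_{Y|X}(y|x) r^{(k)}_{X|Y}(x|y)^{1−1/α} )^{α/(2α−1)} / (normalizing sum over x); set p^{(0)}_X(x) := Σ_y q̃^{(0)}_{X,Y}(x,y). Then for every k ≥ 0: F̃_α^{LP}(p^{(k)}_X, q̃^{(k)}_{X,Y}, r^{(k)}_{X|Y})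 ≤ F̃_α^{LP}(p^{(k+1)}_X, q̃^{(k+1)}_{X,Y}, r^{(k)}_{X|Y}) ≤ F̃_α^{LP}(p^{(k+1)}_X, q̃^{(k+1)}_{X,Y}, r^{(k+1)}_{X|Y}) ≤ C_α^{LP}, so the sequence of objective values is nondecreasing and bounded above by the Lapidoth–Pfister capacity C_α^{LP}. -/

import Mathlib

/-- A probability mass function on a finite type. -/
def IsPMF {Z : Type*} [Fintype Z] (q : Z → ℝ) : Prop :=
  (∀ z, 0 ≤ q z) ∧ ∑ z, q z = 1

/-- Kullback--Leibler divergence (natural log). -/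
noncomputable def klD {Z : Type*} [Fintype Z] (p q : Z → ℝ) : ℝ :=
  ∑ z, p z * Real.log (p z / q z)

/-- Rényi divergence of order `α`, valued in `EReal` (equal to `⊤` when `α > 1` and
`q` vanishes somewhere on the support of `p`). -/
noncomputable def renyiDE {Z : Type*} [Fintype Z] (α : ℝ) (p q : Z → ℝ) : EReal :=
  if 1 < α ∧ ∃ z, p z ≠ 0 ∧ q z = 0 then ⊤
  else (((1 / (α - 1)) * Real.log (∑ z, p z ^ α * q z ^ (1 - α)) : ℝ) : EReal)

/-- The Lapidoth--Pfister capacity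
`C_α^{LP} = max_{p_X} min_{q_X, q_Y} D_α(p_X p_{Y|X} ‖ q_X q_Y)`. -/
noncomputable def lpCap {X Y : Type*} [Fintype X] [Fintype Y]
    (α : ℝ) (pYX : X → Y → ℝ) : EReal :=
  sSup {v : EReal | ∃ pX : X → ℝ, IsPMF pX ∧
    v = sInf {w : EReal | ∃ qX : X → ℝ, ∃ qY : Y → ℝ, IsPMF qX ∧ IsPMF qY ∧
      w = renyiDE α (fun z : X × Y => pX z.1 * pYX z.1 z.2)
            (fun z : X × Y => qX z.1 * qY z.2)}}

/-- `F̃_α^{LP}(p_X, q̃_{X,Y}, r_{X|Y})`. -/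
noncomputable def FtildeLP {X Y : Type*} [Fintype X] [Fintype Y]
    (α : ℝ) (pYX : X → Y → ℝ) (pX : X → ℝ) (qt : X × Y → ℝ) (r : Y → X → ℝ) : ℝ :=
  (α / (1 - α)) * klD qt (fun z : X × Y => (∑ y, qt (z.1, y)) * pYX z.1 z.2)
  + ∑ z : X × Y, qt z * Real.log (r z.2 z.1 / ∑ y, qt (z.1, y))
  + (α / (1 - α)) * klD (fun x => ∑ y, qt (x, y)) pX

/-- Posterior reverse channel of a joint distribution. -/
noncomputable def post {X Y : Type*} [Fintype X] [Fintype Y] (q : X × Y → ℝ) :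
    Y → X → ℝ :=
  fun y x => q (x, y) / ∑ x', q (x', y)

/-- `X`-marginal of a joint distribution. -/
noncomputable def margX {X Y : Type*} [Fintype X] [Fintype Y] (q : X × Y → ℝ) :
    X → ℝ :=
  fun x => ∑ y, q (x, y)

/-- One step of the alternating-optimization update: `q̃^{(k+1)} = q̂_X q̂_{Y|X}` built
from `p^{(k+1)} = margX q̃^{(k)}` and `r^{(k)} = post q̃^{(k)}`. -/
noncomputable def nextq {X Y : Type*} [Fintype X] [Fintype Y]
    (α : ℝ) (pYX : X → Y → ℝ) (q : X × Y → ℝ) : X × Y → ℝ :=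
  fun z =>
    (margX q z.1 ^ (α / (2 * α - 1)) *
        (∑ y, pYX z.1 y * post q y z.1 ^ (1 - 1 / α)) ^ (α / (2 * α - 1)) /
      ∑ x', margX q x' ^ (α / (2 * α - 1)) *
        (∑ y, pYX x' y * post q y x' ^ (1 - 1 / α)) ^ (α / (2 * α - 1))) *
    (pYX z.1 z.2 * post q z.2 z.1 ^ (1 - 1 / α) /
      ∑ y', pYX z.1 y' * post q y' z.1 ^ (1 - 1 / α))

/-- The sequence `q̃^{(k)}` of joint distributions generated by the AO algorithm. -/
noncomputable def qseq {X Y : Type*} [Fintype X] [Fintype Y]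
    (α : ℝ) (pYX : X → Y → ℝ) (q0 : X × Y → ℝ) : ℕ → X × Y → ℝ
  | 0 => q0
  | k + 1 => nextq α pYX (qseq α pYX q0 k)

/-- The sequence `p^{(k)}` of input distributions: `p^{(0)} = margX q̃^{(0)}` and
`p^{(k+1)} = margX q̃^{(k)}`. -/
noncomputable def pseq {X Y : Type*} [Fintype X] [Fintype Y]
    (α : ℝ) (pYX : X → Y → ℝ) (q0 : X × Y → ℝ) (k : ℕ) : X → ℝ :=
  margX (qseq α pYX q0 (k - 1))

/-!
Each update maximizes `F̃` in one argument with the other two fixed. Passing from `p` to the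
`X`-marginal of `q̃` removes the penalty `(α/(1-α)) D(q̃_X‖p) ≤ 0`. Passing from `r` to the
posterior of `q̃` gains `∑_y q̃_Y(y) D(q̃(·|y)‖r(·|y)) ≥ 0`. For fixed `(p, r)` one has the identity
`F̃(p, u, r) = ((2α-1)/(α-1)) log N - (α/(α-1)) D(u‖q̂) - D(u_X‖q̂_X)`, with `N` the normalizer
of `q̂_X`, so `u = q̂` is optimal.

For the capacity bound fix `q_X, q_Y` and let `a = (p_X p_{Y|X})^α (q_X q_Y)^{1-α}`. When `r` is
the posterior of `q̃`, `∑ q̃ log (a / q̃) = (α-1) (F̃ + D(q̃_X‖q_X) + D(q̃_Y‖q_Y))`, and by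
Jensen the left side is at most `log ∑ a = (α-1) D_α(p_X p_{Y|X}‖q_X q_Y)`.
-/

open Finset Real InformationTheory

namespace LapidothPfister

section Divergence

variable {Z : Type*} [Fintype Z]

theorem klD_nonneg {f g : Z → ℝ} (hf : ∀ z, 0 ≤ f z) (hg : ∀ z, 0 < g z)
    (hfg : ∑ z, g z ≤ ∑ z, f z) : 0 ≤ klD f g := by
  have hterm : ∀ z, g z * klFun (f z / g z) = f z * log (f z / g z) + g z - f z := by
    intro z
    rw [klFun_apply]
    field_simp [(hg z).ne']
  have hsum := sum_nonneg fun z (_ : z ∈ univ) =>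
    mul_nonneg (hg z).le (klFun_nonneg (div_nonneg (hf z) (hg z).le))
  simp only [hterm, sum_sub_distrib, sum_add_distrib] at hsum
  unfold klD
  linarith

theorem klD_self (g : Z → ℝ) : klD g g = 0 := by
  refine sum_eq_zero fun z _ => ?_
  rcases eq_or_ne (g z) 0 with h | h
  · simp [h]
  · simp [div_self h]

theorem sum_mul_log_div_le_log_sum {w a : Z → ℝ} (hw : ∀ z, 0 < w z)
    (hw_sum : ∑ z, w z = 1) (ha : ∀ z, 0 < a z) :
    ∑ z, w z * log (a z / w z) ≤ log (∑ z, a z) := by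
  have hjensen := strictConcaveOn_log_Ioi.concaveOn.le_map_sum (t := univ) (w := w)
    (p := fun z => a z / w z) (fun z _ => (hw z).le) hw_sum
    (fun z _ => div_pos (ha z) (hw z))
  simpa only [smul_eq_mul, mul_div_cancel₀ _ (hw _).ne'] using hjensen

end Divergence

section Marginal

variable {X Y : Type*} [Fintype X]

theorem sum_fst_pos [Nonempty X] {q : X × Y → ℝ} (hq : ∀ z, 0 < q z) (y : Y) :
    0 < ∑ x, q (x, y) :=
  sum_pos (fun x _ => hq (x, y)) univ_nonempty

variable [Fintype Y]

theorem sum_eq_margX (u : X × Y → ℝ) (x : X) : ∑ y, u (x, y) = margX u x := rfl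

theorem sum_margX_mul (u : X × Y → ℝ) (f : X → ℝ) :
    ∑ x, margX u x * f x = ∑ z, u z * f z.1 := by
  simp only [margX, sum_mul, Fintype.sum_prod_type]

theorem sum_sum_fst_mul (q : X × Y → ℝ) (f : Y → ℝ) :
    ∑ y, (∑ x, q (x, y)) * f y = ∑ z, q z * f z.2 := by
  simp only [sum_mul, Fintype.sum_prod_type_right]

theorem sum_margX (u : X × Y → ℝ) : ∑ x, margX u x = ∑ z, u z := by
  simpa using sum_margX_mul u 1

theorem klD_margX (u : X × Y → ℝ) (g : X → ℝ) :
    klD (margX u) g = ∑ z, u z * log (margX u z.1 / g z.1) :=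
  sum_margX_mul u fun x => log (margX u x / g x)

theorem isPMF_margX {u : X × Y → ℝ} (hu : IsPMF u) : IsPMF (margX u) :=
  ⟨fun x => sum_nonneg fun y _ => hu.1 (x, y), (sum_margX u).trans hu.2⟩

theorem margX_pos [Nonempty Y] {u : X × Y → ℝ} (hu : ∀ z, 0 < u z) (x : X) :
    0 < margX u x :=
  sum_pos (fun y _ => hu (x, y)) univ_nonempty

variable [Nonempty X] {q : X × Y → ℝ}

theorem post_pos (hq : ∀ z, 0 < q z) (y : Y) (x : X) : 0 < post q y x :=
  div_pos (hq (x, y)) (sum_fst_pos hq y)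

theorem sum_post (hq : ∀ z, 0 < q z) (y : Y) : ∑ x, post q y x = 1 := by
  simp only [post]
  rw [← sum_div, div_self (sum_fst_pos hq y).ne']

theorem sum_fst_mul_post (hq : ∀ z, 0 < q z) (x : X) (y : Y) :
    (∑ x', q (x', y)) * post q y x = q (x, y) :=
  mul_div_cancel₀ _ (sum_fst_pos hq y).ne'

end Marginal

section Objective

variable {X Y : Type*} [Fintype X] [Fintype Y] {α : ℝ} {pYX : X → Y → ℝ}

theorem FtildeLP_eq_sum (p : X → ℝ) (u : X × Y → ℝ) (r : Y → X → ℝ) :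
    FtildeLP α pYX p u r =
      ∑ z, u z * (α / (1 - α) * log (u z / (margX u z.1 * pYX z.1 z.2))
        + log (r z.2 z.1 / margX u z.1) + α / (1 - α) * log (margX u z.1 / p z.1)) := by
  simp only [FtildeLP, klD, sum_eq_margX]
  rw [sum_margX_mul u fun x => log (margX u x / p x),
    mul_sum, mul_sum, ← sum_add_distrib, ← sum_add_distrib]
  exact sum_congr rfl fun z _ => by ring

theorem FtildeLP_le_FtildeLP_margX (hα : 1 < α) {p : X → ℝ} (hp : IsPMF p)
    (hp_pos : ∀ x, 0 < p x) {u : X × Y → ℝ} (hu : IsPMF u) (r : Y → X → ℝ) :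
    FtildeLP α pYX p u r ≤ FtildeLP α pYX (margX u) u r := by
  have hkl : 0 ≤ klD (margX u) p :=
    klD_nonneg (isPMF_margX hu).1 hp_pos (by rw [hp.2, (isPMF_margX hu).2])
  have hcoef : α / (1 - α) ≤ 0 := div_nonpos_of_nonneg_of_nonpos (by linarith) (by linarith)
  have hpenalty := mul_nonpos_of_nonpos_of_nonneg hcoef hkl
  simp only [FtildeLP, sum_eq_margX, klD_self]
  linarith

theorem FtildeLP_le_FtildeLP_post [Nonempty X] (p : X → ℝ) {q : X × Y → ℝ}
    (hq : ∀ z, 0 < q z) {r : Y → X → ℝ} (hr : ∀ y x, 0 < r y x)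
    (hr_sum : ∀ y, ∑ x, r y x = 1) :
    FtildeLP α pYX p q r ≤ FtildeLP α pYX p q (post q) := by
  have hgain : ∑ z : X × Y, q z * log (r z.2 z.1 / ∑ y, q (z.1, y))
      ≤ ∑ z : X × Y, q z * log (post q z.2 z.1 / ∑ y, q (z.1, y)) := by
    rw [← sub_nonneg, ← sum_sub_distrib, Fintype.sum_prod_type_right]
    refine sum_nonneg fun y _ => ?_
    have hterm : ∀ x, q (x, y) * log (post q y x / ∑ y', q (x, y'))
        - q (x, y) * log (r y x / ∑ y', q (x, y'))
        = (∑ x', q (x', y)) * (post q y x * log (post q y x / r y x)) := by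
      intro x
      have hm : 0 < ∑ y', q (x, y') := sum_pos (fun y' _ => hq (x, y')) ⟨y, mem_univ y⟩
      rw [← sum_fst_mul_post hq x y, log_div (post_pos hq y x).ne' (hr y x).ne',
        log_div (post_pos hq y x).ne' hm.ne', log_div (hr y x).ne' hm.ne']
      ring
    rw [sum_congr rfl fun x _ => hterm x, ← mul_sum]
    exact mul_nonneg (sum_fst_pos hq y).le <| klD_nonneg (fun x => (post_pos hq y x).le)
      (hr y) (by rw [hr_sum, sum_post hq])
  simp only [FtildeLP]
  linarith

end Objective

section Qhat

variable {X Y : Type*} [Fintype Y] (α : ℝ) (pYX : X → Y → ℝ) (p : X → ℝ) (r : Y → X → ℝ)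

noncomputable def qhatCondNorm (x : X) : ℝ :=
  ∑ y, pYX x y * r y x ^ (1 - 1 / α)

noncomputable def qhatCond (x : X) (y : Y) : ℝ :=
  pYX x y * r y x ^ (1 - 1 / α) / qhatCondNorm α pYX r x

section Cond

variable {α pYX r} [Nonempty Y]

theorem qhatCondNorm_pos (hpYX : ∀ x y, 0 < pYX x y) (hr : ∀ y x, 0 < r y x) (x : X) :
    0 < qhatCondNorm α pYX r x :=
  sum_pos (fun y _ => mul_pos (hpYX x y) (rpow_pos_of_pos (hr y x) _)) univ_nonempty

theorem qhatCond_pos (hpYX : ∀ x y, 0 < pYX x y) (hr : ∀ y x, 0 < r y x) (x : X) (y : Y) :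
    0 < qhatCond α pYX r x y :=
  div_pos (mul_pos (hpYX x y) (rpow_pos_of_pos (hr y x) _)) (qhatCondNorm_pos hpYX hr x)

theorem sum_qhatCond (hpYX : ∀ x y, 0 < pYX x y) (hr : ∀ y x, 0 < r y x) (x : X) :
    ∑ y, qhatCond α pYX r x y = 1 := by
  simp only [qhatCond]
  rw [← sum_div, ← qhatCondNorm, div_self (qhatCondNorm_pos hpYX hr x).ne']

theorem log_qhatCond (hpYX : ∀ x y, 0 < pYX x y) (hr : ∀ y x, 0 < r y x) (x : X) (y : Y) :
    log (qhatCond α pYX r x y) =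
      log (pYX x y) + (1 - 1 / α) * log (r y x) - log (qhatCondNorm α pYX r x) := by
  rw [qhatCond, log_div (mul_pos (hpYX x y) (rpow_pos_of_pos (hr y x) _)).ne'
    (qhatCondNorm_pos hpYX hr x).ne', log_mul (hpYX x y).ne' (rpow_pos_of_pos (hr y x) _).ne',
    log_rpow (hr y x)]

end Cond

variable [Fintype X]

noncomputable def qhatXNorm : ℝ :=
  ∑ x, p x ^ (α / (2 * α - 1)) * qhatCondNorm α pYX r x ^ (α / (2 * α - 1))

noncomputable def qhatX (x : X) : ℝ :=
  p x ^ (α / (2 * α - 1)) * qhatCondNorm α pYX r x ^ (α / (2 * α - 1)) /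
    qhatXNorm α pYX p r

noncomputable def qhat (z : X × Y) : ℝ :=
  qhatX α pYX p r z.1 * qhatCond α pYX r z.1 z.2

variable {α pYX p r} [Nonempty Y]

theorem margX_qhat (hpYX : ∀ x y, 0 < pYX x y) (hr : ∀ y x, 0 < r y x) :
    margX (qhat α pYX p r) = qhatX α pYX p r := by
  ext x
  simp only [margX, qhat, ← mul_sum, sum_qhatCond hpYX hr, mul_one]

variable [Nonempty X]

theorem qhatXNorm_pos (hpYX : ∀ x y, 0 < pYX x y) (hp : ∀ x, 0 < p x)
    (hr : ∀ y x, 0 < r y x) : 0 < qhatXNorm α pYX p r :=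
  sum_pos (fun x _ => mul_pos (rpow_pos_of_pos (hp x) _)
    (rpow_pos_of_pos (qhatCondNorm_pos hpYX hr x) _)) univ_nonempty

theorem qhatX_pos (hpYX : ∀ x y, 0 < pYX x y) (hp : ∀ x, 0 < p x) (hr : ∀ y x, 0 < r y x)
    (x : X) : 0 < qhatX α pYX p r x :=
  div_pos (mul_pos (rpow_pos_of_pos (hp x) _)
    (rpow_pos_of_pos (qhatCondNorm_pos hpYX hr x) _)) (qhatXNorm_pos hpYX hp hr)

theorem log_qhatX (hpYX : ∀ x y, 0 < pYX x y) (hp : ∀ x, 0 < p x) (hr : ∀ y x, 0 < r y x)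
    (x : X) :
    log (qhatX α pYX p r x) = α / (2 * α - 1) * (log (p x) + log (qhatCondNorm α pYX r x))
      - log (qhatXNorm α pYX p r) := by
  have hs := qhatCondNorm_pos (α := α) hpYX hr x
  rw [qhatX, log_div (mul_pos (rpow_pos_of_pos (hp x) _) (rpow_pos_of_pos hs _)).ne'
    (qhatXNorm_pos hpYX hp hr).ne', log_mul (rpow_pos_of_pos (hp x) _).ne'
    (rpow_pos_of_pos hs _).ne', log_rpow (hp x), log_rpow hs]
  ring

theorem qhat_pos (hpYX : ∀ x y, 0 < pYX x y) (hp : ∀ x, 0 < p x) (hr : ∀ y x, 0 < r y x)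
    (z : X × Y) : 0 < qhat α pYX p r z :=
  mul_pos (qhatX_pos hpYX hp hr z.1) (qhatCond_pos hpYX hr z.1 z.2)

theorem isPMF_qhat (hpYX : ∀ x y, 0 < pYX x y) (hp : ∀ x, 0 < p x) (hr : ∀ y x, 0 < r y x) :
    IsPMF (qhat α pYX p r) := by
  refine ⟨fun z => (qhat_pos hpYX hp hr z).le, ?_⟩
  rw [← sum_margX, margX_qhat hpYX hr]
  simp only [qhatX]
  rw [← sum_div, ← qhatXNorm, div_self (qhatXNorm_pos hpYX hp hr).ne']

end Qhat

section Step

variable {X Y : Type*} [Fintype X] [Fintype Y] [Nonempty X] [Nonempty Y] {α : ℝ}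
  {pYX : X → Y → ℝ} {p : X → ℝ} {r : Y → X → ℝ}

theorem FtildeLP_eq_log_qhatXNorm_sub (hα : 1 < α) (hpYX : ∀ x y, 0 < pYX x y)
    (hp : ∀ x, 0 < p x) (hr : ∀ y x, 0 < r y x) {u : X × Y → ℝ} (hu : ∀ z, 0 < u z)
    (hu_sum : ∑ z, u z = 1) :
    FtildeLP α pYX p u r =
      (2 * α - 1) / (α - 1) * log (qhatXNorm α pYX p r)
        - α / (α - 1) * klD u (qhat α pYX p r) - klD (margX u) (qhatX α pYX p r) := by
  have hK : (2 * α - 1) / (α - 1) * log (qhatXNorm α pYX p r)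
      = ∑ z, u z * ((2 * α - 1) / (α - 1) * log (qhatXNorm α pYX p r)) := by
    rw [← sum_mul, hu_sum, one_mul]
  rw [FtildeLP_eq_sum, klD, klD_margX, hK, mul_sum, ← sum_sub_distrib, ← sum_sub_distrib]
  refine sum_congr rfl fun z _ => ?_
  have hm := margX_pos hu z.1
  have hP := hpYX z.1 z.2
  have hrz := hr z.2 z.1
  have hX := qhatX_pos (α := α) hpYX hp hr z.1
  have hC := qhatCond_pos (α := α) hpYX hr z.1 z.2
  rw [qhat, log_div (hu z).ne' (mul_pos hm hP).ne', log_mul hm.ne' hP.ne',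
    log_div hrz.ne' hm.ne', log_div hm.ne' (hp z.1).ne', log_div (hu z).ne' (mul_pos hX hC).ne',
    log_mul hX.ne' hC.ne', log_div hm.ne' hX.ne', log_qhatX hpYX hp hr, log_qhatCond hpYX hr]
  have hα1 : 1 - α ≠ 0 := by linarith
  have hα1' : α - 1 ≠ 0 := by linarith
  have hα2 : α * 2 - 1 ≠ 0 := by linarith
  field_simp
  ring

theorem FtildeLP_le_FtildeLP_qhat (hα : 1 < α) (hpYX : ∀ x y, 0 < pYX x y)
    (hp : ∀ x, 0 < p x) (hr : ∀ y x, 0 < r y x) {u : X × Y → ℝ} (hu : ∀ z, 0 < u z)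
    (hu_sum : ∑ z, u z = 1) :
    FtildeLP α pYX p u r ≤ FtildeLP α pYX p (qhat α pYX p r) r := by
  have hqhat := isPMF_qhat (α := α) hpYX hp hr
  have hqhat_pos := qhat_pos (α := α) hpYX hp hr
  rw [FtildeLP_eq_log_qhatXNorm_sub hα hpYX hp hr hu hu_sum,
    FtildeLP_eq_log_qhatXNorm_sub hα hpYX hp hr hqhat_pos hqhat.2, margX_qhat hpYX hr,
    klD_self, klD_self]
  have hjoint : 0 ≤ klD u (qhat α pYX p r) :=
    klD_nonneg (fun z => (hu z).le) hqhat_pos (by rw [hqhat.2, hu_sum])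
  have hmarg : 0 ≤ klD (margX u) (qhatX α pYX p r) := by
    refine klD_nonneg (fun x => (margX_pos hu x).le) (qhatX_pos hpYX hp hr) ?_
    rw [sum_margX, hu_sum, ← margX_qhat hpYX hr, sum_margX, hqhat.2]
  have hcoef : 0 ≤ α / (α - 1) := div_nonneg (by linarith) (by linarith)
  have hpenalty := mul_nonneg hcoef hjoint
  linarith

end Step

section Capacity

variable {X Y : Type*} [Fintype X] [Fintype Y] [Nonempty X] [Nonempty Y] {α : ℝ}
  {pYX : X → Y → ℝ} {pX : X → ℝ} {q : X × Y → ℝ}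

theorem FtildeLP_post_le_log_sum (hα : 1 < α) (hpYX : ∀ x y, 0 < pYX x y)
    (hpX : ∀ x, 0 < pX x) (hq : ∀ z, 0 < q z) (hq_sum : ∑ z, q z = 1)
    {qX : X → ℝ} (hqX : IsPMF qX) (hqX_pos : ∀ x, 0 < qX x)
    {qY : Y → ℝ} (hqY : IsPMF qY) (hqY_pos : ∀ y, 0 < qY y) :
    FtildeLP α pYX pX q (post q) ≤
      1 / (α - 1) * log (∑ z : X × Y,
        (pX z.1 * pYX z.1 z.2) ^ α * (qX z.1 * qY z.2) ^ (1 - α)) := by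
  set a : X × Y → ℝ := fun z => (pX z.1 * pYX z.1 z.2) ^ α * (qX z.1 * qY z.2) ^ (1 - α)
  have ha : ∀ z, 0 < a z := fun z =>
    mul_pos (rpow_pos_of_pos (mul_pos (hpX z.1) (hpYX z.1 z.2)) _)
      (rpow_pos_of_pos (mul_pos (hqX_pos z.1) (hqY_pos z.2)) _)
  have hsplit : ∑ z, q z * log (a z / q z) = (α - 1) * FtildeLP α pYX pX q (post q)
      + (α - 1) * klD (margX q) qX + (α - 1) * klD (fun y => ∑ x, q (x, y)) qY := by
    rw [FtildeLP_eq_sum, klD_margX, klD, sum_sum_fst_mul q fun y => log ((∑ x, q (x, y)) / qY y),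
      mul_sum, mul_sum, mul_sum, ← sum_add_distrib, ← sum_add_distrib]
    refine sum_congr rfl fun z _ => ?_
    have hm := margX_pos hq z.1
    have hQ := sum_fst_pos hq z.2
    have hpost := post_pos hq z.2 z.1
    have hP := hpYX z.1 z.2
    have hqz : q z = (∑ x, q (x, z.2)) * post q z.2 z.1 := (sum_fst_mul_post hq z.1 z.2).symm
    rw [hqz, log_div (ha z).ne' (mul_pos hQ hpost).ne', log_mul hQ.ne' hpost.ne',
      log_mul (rpow_pos_of_pos (mul_pos (hpX z.1) hP) _).ne'
        (rpow_pos_of_pos (mul_pos (hqX_pos z.1) (hqY_pos z.2)) _).ne',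
      log_rpow (mul_pos (hpX z.1) hP), log_rpow (mul_pos (hqX_pos z.1) (hqY_pos z.2)),
      log_mul (hpX z.1).ne' hP.ne', log_mul (hqX_pos z.1).ne' (hqY_pos z.2).ne',
      log_div (mul_pos hQ hpost).ne' (mul_pos hm hP).ne', log_mul hQ.ne' hpost.ne',
      log_mul hm.ne' hP.ne', log_div hpost.ne' hm.ne', log_div hm.ne' (hpX z.1).ne',
      log_div hm.ne' (hqX_pos z.1).ne', log_div hQ.ne' (hqY_pos z.2).ne']
    have hα1 : 1 - α ≠ 0 := by linarith
    field_simp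
    ring
  have hklX : 0 ≤ klD (margX q) qX :=
    klD_nonneg (fun x => (margX_pos hq x).le) hqX_pos (by rw [hqX.2, sum_margX, hq_sum])
  have hklY : 0 ≤ klD (fun y => ∑ x, q (x, y)) qY := by
    refine klD_nonneg (fun y => (sum_fst_pos hq y).le) hqY_pos ?_
    rw [hqY.2, ← Fintype.sum_prod_type_right' fun x y => q (x, y), hq_sum]
  have hjensen := sum_mul_log_div_le_log_sum hq hq_sum ha
  have hα1 : 0 < α - 1 := by linarith
  have hpenalty := mul_nonneg hα1.le (add_nonneg hklX hklY)
  rw [one_div_mul_eq_div, le_div_iff₀' hα1]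
  linarith

theorem FtildeLP_post_le_renyiDE (hα : 1 < α) (hpYX : ∀ x y, 0 < pYX x y)
    (hpX : ∀ x, 0 < pX x) (hq : ∀ z, 0 < q z) (hq_sum : ∑ z, q z = 1)
    {qX : X → ℝ} (hqX : IsPMF qX) {qY : Y → ℝ} (hqY : IsPMF qY) :
    (FtildeLP α pYX pX q (post q) : EReal) ≤
      renyiDE α (fun z : X × Y => pX z.1 * pYX z.1 z.2) (fun z : X × Y => qX z.1 * qY z.2) := by
  unfold renyiDE
  split_ifs with hinf
  · exact le_top
  have hprod : ∀ x y, qX x * qY y ≠ 0 := fun x y h =>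
    hinf ⟨hα, (x, y), (mul_pos (hpX x) (hpYX x y)).ne', h⟩
  have hqX_pos : ∀ x, 0 < qX x := fun x =>
    (hqX.1 x).lt_of_ne' (left_ne_zero_of_mul (hprod x (Classical.arbitrary Y)))
  have hqY_pos : ∀ y, 0 < qY y := fun y =>
    (hqY.1 y).lt_of_ne' (right_ne_zero_of_mul (hprod (Classical.arbitrary X) y))
  exact EReal.coe_le_coe_iff.mpr
    (FtildeLP_post_le_log_sum hα hpYX hpX hq hq_sum hqX hqX_pos hqY hqY_pos)

theorem FtildeLP_post_le_lpCap (hα : 1 < α) (hpYX : ∀ x y, 0 < pYX x y) (hpX : IsPMF pX)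
    (hpX_pos : ∀ x, 0 < pX x) (hq : ∀ z, 0 < q z) (hq_sum : ∑ z, q z = 1) :
    (FtildeLP α pYX pX q (post q) : EReal) ≤ lpCap α pYX := by
  refine le_trans ?_ (le_sSup ⟨pX, hpX, rfl⟩)
  refine le_sInf ?_
  rintro _ ⟨qX, qY, hqX, hqY, rfl⟩
  exact FtildeLP_post_le_renyiDE hα hpYX hpX_pos hq hq_sum hqX hqY

end Capacity

section Iterates

variable {X Y : Type*} [Fintype X] [Fintype Y] {α : ℝ} {pYX : X → Y → ℝ} {q0 : X × Y → ℝ}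

theorem qseq_succ (k : ℕ) :
    qseq α pYX q0 (k + 1) = qhat α pYX (margX (qseq α pYX q0 k)) (post (qseq α pYX q0 k)) :=
  rfl

theorem pseq_succ (k : ℕ) : pseq α pYX q0 (k + 1) = margX (qseq α pYX q0 k) := rfl

variable [Nonempty X] [Nonempty Y]

theorem qseq_pos (hpYX : ∀ x y, 0 < pYX x y) (hq0_pos : ∀ z, 0 < q0 z) :
    ∀ k z, 0 < qseq α pYX q0 k z
  | 0 => hq0_pos
  | k + 1 => qhat_pos hpYX (margX_pos (qseq_pos hpYX hq0_pos k))
      (post_pos (qseq_pos hpYX hq0_pos k))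

theorem isPMF_qseq (hpYX : ∀ x y, 0 < pYX x y) (hq0 : IsPMF q0) (hq0_pos : ∀ z, 0 < q0 z) :
    ∀ k, IsPMF (qseq α pYX q0 k)
  | 0 => hq0
  | k + 1 => isPMF_qhat hpYX (margX_pos (qseq_pos hpYX hq0_pos k))
      (post_pos (qseq_pos hpYX hq0_pos k))

end Iterates

end LapidothPfister

open LapidothPfister

theorem FtildeLP_iterates_monotone_le_cap_general {X Y : Type*} [Fintype X] [Fintype Y]
    [Nonempty X] [Nonempty Y]
    (α : ℝ) (hα : 1 < α)
    (pYX : X → Y → ℝ) (hpYXpos : ∀ x y, 0 < pYX x y)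
    (q0 : X × Y → ℝ) (hq0 : IsPMF q0) (hq0pos : ∀ z, 0 < q0 z) :
    ∀ k : ℕ,
      FtildeLP α pYX (pseq α pYX q0 k) (qseq α pYX q0 k) (post (qseq α pYX q0 k))
        ≤ FtildeLP α pYX (pseq α pYX q0 (k + 1)) (qseq α pYX q0 (k + 1))
            (post (qseq α pYX q0 k)) ∧
      FtildeLP α pYX (pseq α pYX q0 (k + 1)) (qseq α pYX q0 (k + 1))
          (post (qseq α pYX q0 k))
        ≤ FtildeLP α pYX (pseq α pYX q0 (k + 1)) (qseq α pYX q0 (k + 1))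
            (post (qseq α pYX q0 (k + 1))) ∧
      ((FtildeLP α pYX (pseq α pYX q0 (k + 1)) (qseq α pYX q0 (k + 1))
          (post (qseq α pYX q0 (k + 1))) : ℝ) : EReal)
        ≤ lpCap α pYX := by
  intro k
  have hpos := qseq_pos (α := α) hpYXpos hq0pos
  have hpmf := isPMF_qseq (α := α) hpYXpos hq0 hq0pos
  rw [pseq_succ, qseq_succ]
  set q := qseq α pYX q0 k
  refine ⟨?_, ?_, ?_⟩
  · calc FtildeLP α pYX (pseq α pYX q0 k) q (post q)
        ≤ FtildeLP α pYX (margX q) q (post q) :=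
          FtildeLP_le_FtildeLP_margX hα (isPMF_margX (hpmf (k - 1)))
            (margX_pos (hpos (k - 1))) (hpmf k) _
      _ ≤ FtildeLP α pYX (margX q) (qhat α pYX (margX q) (post q)) (post q) :=
          FtildeLP_le_FtildeLP_qhat hα hpYXpos (margX_pos (hpos k)) (post_pos (hpos k))
            (hpos k) (hpmf k).2
  · exact FtildeLP_le_FtildeLP_post _ (hpos (k + 1)) (post_pos (hpos k)) (sum_post (hpos k))
  · exact FtildeLP_post_le_lpCap hα hpYXpos (isPMF_margX (hpmf k)) (margX_pos (hpos k))
      (hpos (k + 1)) (hpmf (k + 1)).2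

/-- Monotonicity of the AO iterates: the objective values are nondecreasing and bounded
above by the Lapidoth--Pfister capacity `C_α^{LP}`. -/
theorem FtildeLP_iterates_monotone_le_cap {X Y : Type*} [Fintype X] [Fintype Y]
    [Nonempty X] [Nonempty Y]
    (α : ℝ) (hα : 1 < α)
    (pYX : X → Y → ℝ) (hpYX : ∀ x, IsPMF (pYX x)) (hpYXpos : ∀ x y, 0 < pYX x y)
    (q0 : X × Y → ℝ) (hq0 : IsPMF q0) (hq0pos : ∀ z, 0 < q0 z) :
    ∀ k : ℕ,
      FtildeLP α pYX (pseq α pYX q0 k) (qseq α pYX q0 k) (post (qseq α pYX q0 k))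
        ≤ FtildeLP α pYX (pseq α pYX q0 (k + 1)) (qseq α pYX q0 (k + 1))
            (post (qseq α pYX q0 k)) ∧
      FtildeLP α pYX (pseq α pYX q0 (k + 1)) (qseq α pYX q0 (k + 1))
          (post (qseq α pYX q0 k))
        ≤ FtildeLP α pYX (pseq α pYX q0 (k + 1)) (qseq α pYX q0 (k + 1))
            (post (qseq α pYX q0 (k + 1))) ∧
      ((FtildeLP α pYX (pseq α pYX q0 (k + 1)) (qseq α pYX q0 (k + 1))
          (post (qseq α pYX q0 (k + 1))) : ℝ) : EReal)
        ≤ lpCap α pYX :=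
  FtildeLP_iterates_monotone_le_cap_general α hα pYX hpYXpos q0 hq0 hq0pos
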